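/- arXiv:1405.6585 — 5 statements merged into one kernel-verified Lean document; each statement's English description precedes it below -/
import Mathlib

section
/- Let R = A Aᴴ where A ∈ ℂ^{n×m}, and suppose y ∈ ℂⁿ lies in the range of A. Then the minimum of ‖s‖₂² over all s ∈ ℂᵐ with A s = y equals the smallest t such that the block matrix [[t, yᴴ],[y, R]] is positive semidefinite. -/
open Matrix ComplexOrder

/-!
For any `p` with `A p = y`, the bordered matrix `[[t, yᴴ], [y, A Aᴴ]]` equals
`diag (t - ‖p‖², 0) + B Bᴴ` with `B = [pᴴ; A]`, so it is positive semidefinite once `t ≥ ‖p‖²`.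
Since `y` lies in the range of `A Aᴴ`, say `y = A Aᴴ u`, the vector `z = (1, -u)` is killed by
`Bᴴ` for `p = Aᴴ u`, and testing semidefiniteness on `z` gives `t ≥ ‖Aᴴ u‖²`. So `‖Aᴴ u‖²` is the
least element of both sets: a solution `s` of `A s = y` has `‖s‖² ≥ ‖Aᴴ u‖²` because, taking
`p = s`, the bordered matrix at `t = ‖s‖²` is positive semidefinite.
-/

namespace Matrix

variable {𝕜 ι κ : Type*} [RCLike 𝕜] [Fintype κ]

def borderedMatrix (t : 𝕜) (y : ι → 𝕜) (R : Matrix ι ι 𝕜) :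
    Matrix (Fin 1 ⊕ ι) (Fin 1 ⊕ ι) 𝕜 :=
  fromBlocks (of fun _ _ => t) (of fun _ j => star (y j)) (of fun i _ => y i) R

lemma dotProduct_star_self_eq_sum_norm_sq (v : κ → 𝕜) :
    star v ⬝ᵥ v = ((∑ i, ‖v i‖ ^ 2 : ℝ) : 𝕜) := by
  simp [dotProduct, RCLike.conj_mul]

lemma borderedMatrix_eq_diagonal_add_mul_conjTranspose [DecidableEq ι] (t : 𝕜)
    (A : Matrix ι κ 𝕜) (p : κ → 𝕜) :
    borderedMatrix t (A *ᵥ p) (A * Aᴴ) =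
      diagonal (Sum.elim (fun _ => t - star p ⬝ᵥ p) 0) +
        fromRows (replicateRow (Fin 1) (star p)) A *
          (fromRows (replicateRow (Fin 1) (star p)) A)ᴴ := by
  ext (i | i) (j | j)
  · simp [borderedMatrix, mul_apply, dotProduct, Subsingleton.elim i j]
  all_goals simp [borderedMatrix, mul_apply, dotProduct, mulVec, mul_comm, diagonal_apply]

variable [Fintype ι]

lemma exists_mul_conjTranspose_mulVec_eq {A : Matrix ι κ 𝕜} {y : ι → 𝕜}
    (hy : ∃ s, A *ᵥ s = y) : ∃ u, (A * Aᴴ) *ᵥ u = y := by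
  have hrange : LinearMap.range (A * Aᴴ).mulVecLin = LinearMap.range A.mulVecLin := by
    refine Submodule.eq_of_le_of_finrank_le ?_ A.rank_self_mul_conjTranspose.ge
    rw [mulVecLin_mul]
    exact LinearMap.range_comp_le_range _ _
  obtain ⟨s, rfl⟩ := hy
  have : A *ᵥ s ∈ LinearMap.range (A * Aᴴ).mulVecLin := hrange ▸ LinearMap.mem_range_self _ s
  exact this

lemma borderedMatrix_posSemidef {t : ℝ} (A : Matrix ι κ 𝕜) (p : κ → 𝕜)
    (ht : ∑ i, ‖p i‖ ^ 2 ≤ t) : (borderedMatrix (t : 𝕜) (A *ᵥ p) (A * Aᴴ)).PosSemidef := by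
  classical
  rw [borderedMatrix_eq_diagonal_add_mul_conjTranspose]
  refine .add (posSemidef_diagonal_iff.2 ?_) (posSemidef_self_mul_conjTranspose _)
  rintro (i | i)
  · rw [Sum.elim_inl, dotProduct_star_self_eq_sum_norm_sq, sub_nonneg]
    exact RCLike.ofReal_le_ofReal.2 ht
  · simp

lemma sum_norm_sq_le_of_borderedMatrix_posSemidef {t : ℝ} (A : Matrix ι κ 𝕜) (u : ι → 𝕜)
    (h : (borderedMatrix (t : 𝕜) ((A * Aᴴ) *ᵥ u) (A * Aᴴ)).PosSemidef) :
    ∑ i, ‖(Aᴴ *ᵥ u) i‖ ^ 2 ≤ t := by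
  classical
  set p := Aᴴ *ᵥ u
  set B := fromRows (replicateRow (Fin 1) (star p)) A
  set z : Fin 1 ⊕ ι → 𝕜 := Sum.elim 1 (-u)
  have hBz : Bᴴ *ᵥ z = 0 := by
    ext k
    simp [B, z, p, mulVec, dotProduct]
  have hz := h.dotProduct_mulVec_nonneg z
  rw [← mulVec_mulVec, borderedMatrix_eq_diagonal_add_mul_conjTranspose, add_mulVec,
    ← mulVec_mulVec, hBz, dotProduct_star_self_eq_sum_norm_sq] at hz
  simp [z, mulVec_diagonal, dotProduct, Fintype.sum_sum_type, sub_nonneg] at hz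
  exact_mod_cast hz

lemma isLeast_borderedMatrix_posSemidef (A : Matrix ι κ 𝕜) (u : ι → 𝕜) :
    IsLeast {t : ℝ | (borderedMatrix (t : 𝕜) ((A * Aᴴ) *ᵥ u) (A * Aᴴ)).PosSemidef}
      (∑ i, ‖(Aᴴ *ᵥ u) i‖ ^ 2) :=
  ⟨mulVec_mulVec u A Aᴴ ▸ borderedMatrix_posSemidef A (Aᴴ *ᵥ u) le_rfl,
    fun _ => sum_norm_sq_le_of_borderedMatrix_posSemidef A u⟩

lemma isLeast_sum_norm_sq_of_mulVec_eq (A : Matrix ι κ 𝕜) (u : ι → 𝕜) :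
    IsLeast {t : ℝ | ∃ s, A *ᵥ s = (A * Aᴴ) *ᵥ u ∧ t = ∑ i, ‖s i‖ ^ 2}
      (∑ i, ‖(Aᴴ *ᵥ u) i‖ ^ 2) := by
  refine ⟨⟨Aᴴ *ᵥ u, mulVec_mulVec .., rfl⟩, ?_⟩
  rintro _ ⟨s, hs, rfl⟩
  exact (isLeast_borderedMatrix_posSemidef A u).2 (hs ▸ borderedMatrix_posSemidef A s le_rfl)

end Matrix

/-- Let `R = A Aᴴ` and suppose `y` lies in the range of `A`. Then the minimum of `‖s‖₂²`
over all `s` with `A s = y` equals the smallest `t` such that the block matrix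
`[[t, yᴴ], [y, R]]` is positive semidefinite. -/
theorem stmt1 (n m : ℕ) (A : Matrix (Fin n) (Fin m) ℂ) (y : Fin n → ℂ)
    (hy : ∃ s : Fin m → ℂ, A.mulVec s = y) :
    sInf {t : ℝ | ∃ s : Fin m → ℂ, A.mulVec s = y ∧ t = ∑ i, ‖s i‖ ^ 2}
      = sInf {t : ℝ |
          (Matrix.fromBlocks
            (Matrix.of fun (_ : Fin 1) (_ : Fin 1) => (t : ℂ))
            (Matrix.of fun (_ : Fin 1) (j : Fin n) => star (y j))
            (Matrix.of fun (i : Fin n) (_ : Fin 1) => y i)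
            (A * Aᴴ)).PosSemidef} := by
  obtain ⟨u, rfl⟩ := exists_mul_conjTranspose_mulVec_eq hy
  rw [(isLeast_sum_norm_sq_of_mulVec_eq A u).csInf_eq]
  exact (isLeast_borderedMatrix_posSemidef A u).csInf_eq.symm
end

section
/- Let Ω ⊆ ℕ be a finite index set with |Ω| = M, and suppose the elements of 𝒟 = {m₁ − m₂ : m₁, m₂ ∈ Ω, m₁ ≥ m₂} have a common divisor b ≥ 2. Then there exist distinct frequencies f₁, f₂ ∈ [0,1) such that the vectors a_Ω(f₁) and a_Ω(f₂) are linearly dependent; concretely, if f₁ = f₂ + 1/b (mod 1), then a_Ω(f₁) = e^{i2π Ω₁/b} a_Ω(f₂), where Ω₁ = min Ω. -/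
/-! Shifting a frequency by `1/b` multiplies the entry indexed by `j` by `e^{i2πj/b}`, and this
factor depends only on `j mod b`. Since all indices are congruent modulo `b` to `Ω₁ = min Ω`,
the factor is the same constant `e^{i2πΩ₁/b}` for every entry; reducing the shifted frequency
mod 1 changes nothing because the indices are integers. -/

open Complex Real

theorem Int.fract_add_ne_self {R : Type*} [Ring R] [LinearOrder R] [IsStrictOrderedRing R]
    [FloorRing R] (x : R) {δ : R} (hδ : Int.fract δ ≠ 0) : Int.fract (x + δ) ≠ x := by
  intro h
  rw [Int.fract, sub_eq_iff_eq_add] at h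
  have hδ_int : δ = ⌊x + δ⌋ := add_left_cancel h
  exact hδ (hδ_int ▸ Int.fract_intCast _)

theorem Complex.exp_two_pi_I_mul_intCast_mul_fract (n : ℤ) (x : ℝ) :
    exp (2 * π * I * n * (Int.fract x : ℝ)) = exp (2 * π * I * n * x) := by
  refine exp_eq_exp_iff_exists_int.mpr ⟨-(n * ⌊x⌋), ?_⟩
  rw [Int.fract]
  push_cast
  ring

theorem Complex.exp_two_pi_I_mul_div_eq_of_dvd_sub {b : ℕ} (hb : b ≠ 0) {m n : ℤ}
    (h : (b : ℤ) ∣ n - m) : exp (2 * π * I * n / b) = exp (2 * π * I * m / b) := by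
  obtain ⟨t, ht⟩ := h
  refine exp_eq_exp_iff_exists_int.mpr ⟨t, ?_⟩
  have hn : (n : ℂ) = m + b * t := by exact_mod_cast (by linear_combination ht : n = m + b * t)
  rw [hn]
  field_simp

theorem stmt4_general (Ω : Finset ℕ) (hne : Ω.Nonempty) (b : ℕ) (hb : 2 ≤ b)
    (hdvd : ∀ m₁ ∈ Ω, ∀ m₂ ∈ Ω, m₂ ≤ m₁ → (b : ℤ) ∣ ((m₁ : ℤ) - (m₂ : ℤ)))
    (f₂ : ℝ)
    (f₁ : ℝ) (hf₁ : f₁ = Int.fract (f₂ + 1 / (b : ℝ))) :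
    f₁ ≠ f₂ ∧ f₁ ∈ Set.Ico (0 : ℝ) 1 ∧
    ∀ j ∈ Ω,
      Complex.exp (2 * Real.pi * Complex.I * (j : ℂ) * (f₁ : ℂ))
        = Complex.exp (2 * Real.pi * Complex.I * ((Ω.min' hne : ℕ) : ℂ) / (b : ℂ))
          * Complex.exp (2 * Real.pi * Complex.I * (j : ℂ) * (f₂ : ℂ)) := by
  have hb_inv : Int.fract (1 / (b : ℝ)) = 1 / b := by
    have : (1 : ℝ) < b := by exact_mod_cast hb
    exact Int.fract_eq_self.mpr ⟨by positivity, (div_lt_one (by positivity)).mpr this⟩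
  subst hf₁
  refine ⟨Int.fract_add_ne_self f₂ (by simp only [hb_inv]; positivity),
    ⟨Int.fract_nonneg _, Int.fract_lt_one _⟩, fun j hj => ?_⟩
  have hj_min : (b : ℤ) ∣ (j : ℤ) - (Ω.min' hne : ℕ) :=
    hdvd j hj _ (Ω.min'_mem hne) (Ω.min'_le j hj)
  calc exp (2 * π * I * j * (Int.fract (f₂ + 1 / b) : ℝ))
      = exp (2 * π * I * j * (f₂ + 1 / b : ℝ)) := by
        exact_mod_cast exp_two_pi_I_mul_intCast_mul_fract j (f₂ + 1 / b)
    _ = exp (2 * π * I * j / b) * exp (2 * π * I * j * f₂) := by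
        rw [← Complex.exp_add]; push_cast; ring_nf
    _ = exp (2 * π * I * (Ω.min' hne : ℕ) / b) * exp (2 * π * I * j * f₂) := by
        congr 1
        exact_mod_cast exp_two_pi_I_mul_div_eq_of_dvd_sub (by omega) hj_min

/-- If the differences of elements of `Ω` all share a common divisor `b ≥ 2`, then the
frequencies `f₁ = f₂ + 1/b (mod 1)` and `f₂` are distinct and give linearly dependent atoms:
concretely `a_Ω(f₁) = e^{i2π Ω₁/b} a_Ω(f₂)` where `Ω₁ = min Ω`. -/
theorem stmt4 (Ω : Finset ℕ) (hne : Ω.Nonempty) (b : ℕ) (hb : 2 ≤ b)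
    (hdvd : ∀ m₁ ∈ Ω, ∀ m₂ ∈ Ω, m₂ ≤ m₁ → (b : ℤ) ∣ ((m₁ : ℤ) - (m₂ : ℤ)))
    (f₂ : ℝ) (hf₂ : f₂ ∈ Set.Ico (0 : ℝ) 1)
    (f₁ : ℝ) (hf₁ : f₁ = Int.fract (f₂ + 1 / (b : ℝ))) :
    f₁ ≠ f₂ ∧ f₁ ∈ Set.Ico (0 : ℝ) 1 ∧
    ∀ j ∈ Ω,
      Complex.exp (2 * Real.pi * Complex.I * (j : ℂ) * (f₁ : ℂ))
        = Complex.exp (2 * Real.pi * Complex.I * ((Ω.min' hne : ℕ) : ℂ) / (b : ℂ))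
          * Complex.exp (2 * Real.pi * Complex.I * (j : ℂ) * (f₂ : ℂ)) :=
  stmt4_general Ω hne b hb hdvd f₂ f₁ hf₁
end

section
/- Let Ω ⊆ ℕ be a finite index set, and suppose there exist distinct f₁, f₂ ∈ [0,1) with a_Ω(f₁) = c e^{iθ} a_Ω(f₂) for some c > 0 and θ ∈ ℝ. Then f₁ − f₂ is a rational number b₁/b₂ in lowest terms with b₂ ≥ 2, and b₂ divides every element of 𝒟 = {m₁ − m₂ : m₁, m₂ ∈ Ω, m₁ ≥ m₂}. -/
/-- If two distinct frequencies `f₁, f₂ ∈ [0,1)` give atoms on `Ω` that are proportional,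
`a_Ω(f₁) = c e^{iθ} a_Ω(f₂)` with `c > 0`, then `f₁ − f₂` is a rational `b₁/b₂` in lowest
terms with `b₂ ≥ 2`, and `b₂` divides every difference of elements of `Ω`. -/
theorem stmt5 (Ω : Finset ℕ) (hcard : 2 ≤ Ω.card)
    (f₁ f₂ : ℝ) (hf₁ : f₁ ∈ Set.Ico (0 : ℝ) 1) (hf₂ : f₂ ∈ Set.Ico (0 : ℝ) 1)
    (hne : f₁ ≠ f₂) (c : ℝ) (hc : 0 < c) (θ : ℝ)
    (h : ∀ j ∈ Ω,
      Complex.exp (2 * Real.pi * Complex.I * (j : ℂ) * (f₁ : ℂ))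
        = (c : ℂ) * Complex.exp (Complex.I * (θ : ℂ))
          * Complex.exp (2 * Real.pi * Complex.I * (j : ℂ) * (f₂ : ℂ))) :
    ∃ (b₁ : ℤ) (b₂ : ℕ), 2 ≤ b₂ ∧ Nat.Coprime b₁.natAbs b₂ ∧
      f₁ - f₂ = (b₁ : ℝ) / (b₂ : ℝ) ∧
      ∀ m₁ ∈ Ω, ∀ m₂ ∈ Ω, m₂ ≤ m₁ → (b₂ : ℤ) ∣ ((m₁ : ℤ) - (m₂ : ℤ)) := by
  have hπI : (2 * (Real.pi : ℂ) * Complex.I) ≠ 0 := by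
    simp [Real.pi_ne_zero, Complex.I_ne_zero]
  -- Key: every difference of elements of Ω times (f₁ - f₂) is an integer
  have key : ∀ m₁ ∈ Ω, ∀ m₂ ∈ Ω,
      ∃ n : ℤ, ((m₁ : ℝ) - (m₂ : ℝ)) * (f₁ - f₂) = (n : ℝ) := by
    intro m₁ h₁ m₂ h₂
    have e₁ := h m₁ h₁
    have e₂ := h m₂ h₂
    have hmul : Complex.exp (2 * Real.pi * Complex.I * (m₁ : ℂ) * (f₁ : ℂ)
          + 2 * Real.pi * Complex.I * (m₂ : ℂ) * (f₂ : ℂ))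
        = Complex.exp (2 * Real.pi * Complex.I * (m₂ : ℂ) * (f₁ : ℂ)
          + 2 * Real.pi * Complex.I * (m₁ : ℂ) * (f₂ : ℂ)) := by
      rw [Complex.exp_add, Complex.exp_add, e₁, e₂]; ring
    rw [Complex.exp_eq_exp_iff_exists_int] at hmul
    obtain ⟨n, hn⟩ := hmul
    refine ⟨n, ?_⟩
    have hC : (((m₁ : ℝ) - (m₂ : ℝ)) * (f₁ - f₂) : ℂ) = (n : ℂ) := by
      have h2 : (2 * (Real.pi : ℂ) * Complex.I) * ((((m₁ : ℝ) : ℂ) - ((m₂ : ℝ) : ℂ)) * (((f₁ : ℝ) : ℂ) - ((f₂ : ℝ) : ℂ)))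
          = (2 * (Real.pi : ℂ) * Complex.I) * (n : ℂ) := by
        push_cast
        push_cast at hn
        linear_combination hn
      have h3 := mul_left_cancel₀ hπI h2
      push_cast
      push_cast at h3
      linear_combination h3
    exact_mod_cast hC
  -- Pick two distinct elements
  obtain ⟨a, b, ha, hb, hab⟩ := Finset.one_lt_card_iff.mp (show 1 < Ω.card by omega)
  -- wlog order them
  have hord : ∃ A ∈ Ω, ∃ B ∈ Ω, B < A := by
    rcases lt_or_gt_of_ne hab with hlt | hlt
    · exact ⟨b, hb, a, ha, hlt⟩
    · exact ⟨a, ha, b, hb, hlt⟩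
  obtain ⟨A, hA, B, hB, hBA⟩ := hord
  obtain ⟨n₀, hn₀⟩ := key A hA B hB
  have hk : (0 : ℝ) < (A : ℝ) - (B : ℝ) := by
    have : (B : ℝ) < (A : ℝ) := by exact_mod_cast hBA
    linarith
  set q : ℚ := Rat.divInt n₀ ((A : ℤ) - (B : ℤ)) with hq
  have hkz : ((A : ℤ) - (B : ℤ)) ≠ 0 := by
    have : (B : ℤ) < (A : ℤ) := by exact_mod_cast hBA
    omega
  have hqval : f₁ - f₂ = (q : ℝ) := by
    have : (q : ℝ) = (n₀ : ℝ) / ((A : ℝ) - (B : ℝ)) := by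
      rw [hq, Rat.divInt_eq_div]
      push_cast
      ring
    rw [this]
    field_simp
    linarith [hn₀]
  -- |f₁ - f₂| < 1 and ≠ 0
  have hd0 : f₁ - f₂ ≠ 0 := sub_ne_zero.mpr hne
  have hdlt : |f₁ - f₂| < 1 := by
    obtain ⟨h10, h11⟩ := hf₁
    obtain ⟨h20, h21⟩ := hf₂
    rw [abs_lt]; constructor <;> linarith
  have hq0 : q ≠ 0 := by
    intro h0
    apply hd0
    rw [hqval, h0]; simp
  have hqlt : |q| < 1 := by
    have : |(q : ℝ)| < 1 := hqval ▸ hdlt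
    exact_mod_cast this
  refine ⟨q.num, q.den, ?_, q.reduced, ?_, ?_⟩
  · -- den ≥ 2
    by_contra hden
    push_neg at hden
    have hd : q.den = 1 := by have := q.pos; omega
    have hnum : (q.num : ℚ) = q := by
      conv_rhs => rw [← Rat.num_div_den q]
      rw [hd]; simp
    rw [← hnum] at hqlt hq0
    have h5 : |q.num| < 1 := by exact_mod_cast hqlt
    have h6 : q.num = 0 := Int.abs_lt_one_iff.mp h5
    simp [h6] at hq0
  · rw [hqval, Rat.cast_def]
  · -- divisibility
    intro m₁ hm₁ m₂ hm₂ hle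
    obtain ⟨n, hn⟩ := key m₁ hm₁ m₂ hm₂
    rcases eq_or_lt_of_le hle with heq | hlt
    · simp [heq]
    · have hk2 : ((m₁ : ℤ) - (m₂ : ℤ)) ≠ 0 := by
        have : (m₂ : ℤ) < (m₁ : ℤ) := by exact_mod_cast hlt
        omega
      have hqn : q = Rat.divInt n ((m₁ : ℤ) - (m₂ : ℤ)) := by
        have h1 : (q : ℝ) = (n : ℝ) / ((m₁ : ℝ) - (m₂ : ℝ)) := by
          rw [← hqval]
          have hkR : ((m₁ : ℝ) - (m₂ : ℝ)) ≠ 0 := by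
            have : (m₂ : ℝ) < (m₁ : ℝ) := by exact_mod_cast hlt
            intro hx; linarith
          field_simp
          linarith [hn]
        have h2 : ((Rat.divInt n ((m₁ : ℤ) - (m₂ : ℤ)) : ℚ) : ℝ)
            = (n : ℝ) / ((m₁ : ℝ) - (m₂ : ℝ)) := by
          rw [Rat.divInt_eq_div]; push_cast; ring
        have : ((q : ℚ) : ℝ) = ((Rat.divInt n ((m₁ : ℤ) - (m₂ : ℤ)) : ℚ) : ℝ) := by
          rw [h1, h2]
        exact_mod_cast this
      have := Rat.den_dvd n ((m₁ : ℤ) - (m₂ : ℤ))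
      rw [← hqn] at this
      exact this
end

section
/- (Exact recovery via atomic ℓ₀ minimization) Suppose Y° = Σ_{j=1}^K c_j a(f_j) φ_j with distinct f_j ∈ [0,1), c_j > 0, ‖φ_j‖₂ = 1, and suppose K < (spark(𝒜_Ω) − 1 + rank(Y°_Ω))/2, where Y°_Ω denotes the rows of Y° indexed by Ω. Then Y° is the unique minimizer of ‖Y‖_{𝒜,0} subject to Y_Ω = Y°_Ω, and the atomic decomposition of Y° achieving ‖Y°‖_{𝒜,0} = K is unique. -/
/-!
Collect the atoms of a decomposition by frequency into a finitely supported coefficient function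
`C : ℝ →₀ ℂ^L`, so that `Y = ∑ₓ a(x) C(x)ᵀ`. Suppose two such functions `C₁`, `C₂`, each with at
most `K` frequencies in `[0,1)`, give the same rows on `Ω`, and let `D = C₁ - C₂ ≠ 0`. Then
`A_Ω D = 0`, and a nonzero vector of the column space of `D` can be chosen to vanish on
`rank D - 1` coordinates; its support is a dependent set of atoms of `𝒜_Ω`, so
`spark + rank D ≤ |supp D| + 1`. The rows of `Y°_Ω` lie in the span of the rows of `D` and of the
coefficients at the common frequencies of `C₁` and `C₂`, so
`rank Y°_Ω ≤ rank D + |supp C₁ ∩ supp C₂|`. Adding up, `spark + rank Y°_Ω ≤ 2K + 1`, contradicting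
the hypothesis. Hence a decomposition with at most `K` atoms agreeing with `Y°` on `Ω` has the
coefficient function of `Y°`, which gives all three claims. That every matrix has some
decomposition, so that `‖Y‖_{𝒜,0}` is attained, follows from the invertibility of the Vandermonde
matrix of the nodes `k / N`.
-/

open Matrix

/-- The atom `a(f)φ ∈ ℂ^{N×L}`. -/
noncomputable def atom (N L : ℕ) (f : ℝ) (φ : Fin L → ℂ) : Matrix (Fin N) (Fin L) ℂ :=
  Matrix.of fun (i : Fin N) (l : Fin L) =>
    Complex.exp (2 * Real.pi * Complex.I * ((i : ℕ) : ℂ) * (f : ℂ)) * φ l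

/-- The atomic `ℓ₀` norm. -/
noncomputable def atomicL0 (N L : ℕ) (Y : Matrix (Fin N) (Fin L) ℂ) : ℕ :=
  sInf {K : ℕ | ∃ (c : Fin K → ℝ) (f : Fin K → ℝ) (φ : Fin K → Fin L → ℂ),
    (∀ k, 0 < c k) ∧ (∀ k, f k ∈ Set.Ico (0 : ℝ) 1) ∧
    (∀ k, ∑ l, ‖φ k l‖ ^ 2 = 1) ∧
    Y = ∑ k, (c k : ℂ) • atom N L (f k) (φ k)}

/-- The restricted steering vector `a_Ω(f)`. -/
noncomputable def aOmega {N : ℕ} (Ω : Finset (Fin N)) (f : ℝ) : Ω → ℂ :=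
  fun j => Complex.exp (2 * Real.pi * Complex.I * (((j : Fin N) : ℕ) : ℂ) * (f : ℂ))

/-- The spark of the continuous dictionary `{a_Ω(f) : f ∈ [0,1)}`. -/
noncomputable def spark {N : ℕ} (Ω : Finset (Fin N)) : ℕ :=
  sInf {r : ℕ | ∃ f : Fin r → ℝ, (∀ k, f k ∈ Set.Ico (0 : ℝ) 1) ∧
    Function.Injective f ∧ ¬ LinearIndependent ℂ (fun k => aOmega Ω (f k))}

open Finset Module Submodule

section LinearAlgebra

variable {K m n : Type*} [Field K] [Fintype m]

theorem Submodule.exists_ne_zero_ncard_support_add_finrank_le (V : Submodule K (m → K))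
    (hV : V ≠ ⊥) :
    ∃ v ∈ V, v ≠ 0 ∧ (Function.support v).ncard + finrank K V ≤ Fintype.card m + 1 := by
  classical
  have hr : 1 ≤ finrank K V := Submodule.one_le_finrank_iff.mpr hV
  have hrm : finrank K V ≤ Fintype.card m := V.finrank_le.trans (finrank_pi K).le
  obtain ⟨S, -, hS⟩ := Finset.exists_subset_card_eq
    (show finrank K V - 1 ≤ #(univ : Finset m) by rw [card_univ]; omega)
  let restrict : V →ₗ[K] (S → K) := LinearMap.funLeft K K Subtype.val ∘ₗ V.subtype
  have hker : LinearMap.ker restrict ≠ ⊥ :=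
    LinearMap.ker_ne_bot_of_finrank_lt (by rw [finrank_pi, Fintype.card_coe]; omega)
  obtain ⟨⟨v, hvV⟩, hv, hv0⟩ := Submodule.ne_bot_iff _ |>.mp hker
  have hvS : ∀ i ∈ S, v i = 0 := fun i hi => congrFun (LinearMap.mem_ker.mp hv) ⟨i, hi⟩
  have hsupp : Function.support v ⊆ ↑(univ \ S) := fun i hi =>
    by simpa using fun hiS => hi (hvS i hiS)
  refine ⟨v, hvV, fun h => hv0 (Subtype.ext h), ?_⟩
  have := (Set.ncard_le_ncard hsupp).trans (Set.ncard_coe_finset _).le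
  rw [card_sdiff_of_subset (subset_univ _), card_univ] at this
  omega

variable [Fintype n]

theorem Matrix.rank_sum_vecMulVec_le {ι : Type*} (s : Finset ι) (u : ι → m → K)
    (w : ι → n → K) :
    (∑ x ∈ s, vecMulVec (u x) (w x)).rank ≤ finrank K (span K (w '' s)) := by
  rw [rank_eq_finrank_span_row]
  refine Submodule.finrank_mono (span_le.mpr ?_)
  rintro _ ⟨j, rfl⟩
  have hrow : (∑ x ∈ s, vecMulVec (u x) (w x)).row j = ∑ x ∈ s, u x j • w x := by
    ext l
    simp [Matrix.sum_apply, vecMulVec_apply]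
  rw [hrow]
  exact sum_mem fun x hx => smul_mem _ _ (subset_span ⟨x, hx, rfl⟩)

end LinearAlgebra

theorem Finsupp.finrank_span_image_support_le {K α V : Type*} [Field K] [AddCommGroup V]
    [Module K V] [DecidableEq α] (C₁ C₂ : α →₀ V) :
    finrank K (span K (C₁ '' C₁.support)) ≤
      finrank K (span K ((C₁ - C₂) '' (C₁ - C₂).support)) + #(C₁.support ∩ C₂.support) := by
  classical
  have hle : span K (C₁ '' C₁.support) ≤
      span K ((C₁ - C₂) '' (C₁ - C₂).support) ⊔ span K (C₁ '' ↑(C₁.support ∩ C₂.support)) := by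
    refine span_le.mpr ?_
    rintro _ ⟨x, hx, rfl⟩
    by_cases hx₂ : x ∈ C₂.support
    · exact mem_sup_right (subset_span ⟨x, by simp_all, rfl⟩)
    · have hD : (C₁ - C₂) x = C₁ x := by simp_all
      refine mem_sup_left (subset_span ⟨x, ?_, hD⟩)
      simp_all
  have := FiniteDimensional.span_of_finite K ((C₁ - C₂).support.finite_toSet.image (C₁ - C₂))
  have := FiniteDimensional.span_of_finite K ((C₁.support ∩ C₂.support).finite_toSet.image C₁)
  calc finrank K (span K (C₁ '' C₁.support))
      ≤ finrank K ↥(span K ((C₁ - C₂) '' (C₁ - C₂).support) ⊔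
          span K (C₁ '' ↑(C₁.support ∩ C₂.support))) := Submodule.finrank_mono hle
    _ ≤ _ := Submodule.finrank_add_le_finrank_add_finrank _ _
    _ ≤ _ := by
        gcongr
        rw [← coe_image]
        exact (finrank_span_finset_le_card _).trans card_image_le

section Synthesis

variable {α m n K : Type*} [Field K]

noncomputable def synthesis (u : α → m → K) (C : α →₀ (n → K)) : Matrix m n K :=
  C.sum fun x w => vecMulVec (u x) w

theorem synthesis_sub (u : α → m → K) (C₁ C₂ : α →₀ (n → K)) :
    synthesis u (C₁ - C₂) = synthesis u C₁ - synthesis u C₂ :=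
  Finsupp.sum_sub_index fun x => vecMulVec_sub (u x)

theorem synthesis_eq_mul (u : α → m → K) (C : α →₀ (n → K)) :
    synthesis u C = (of fun j (x : C.support) => u x j) * of fun (x : C.support) l => C x l := by
  ext j l
  simp [synthesis, Finsupp.sum, Matrix.sum_apply, vecMulVec_apply, mul_apply,
    ← Finset.sum_attach C.support]

theorem synthesis_submatrix {m' : Type*} (u : α → m → K) (C : α →₀ (n → K)) (r : m' → m) :
    (synthesis u C).submatrix r id = synthesis (fun x => u x ∘ r) C := by
  ext i l
  simp [synthesis, Finsupp.sum, Matrix.sum_apply, vecMulVec_apply]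

theorem rank_synthesis_le [Fintype m] [Fintype n] (u : α → m → K) (C : α →₀ (n → K)) :
    (synthesis u C).rank ≤ finrank K (span K (C '' C.support)) :=
  Matrix.rank_sum_vecMulVec_le _ _ _

end Synthesis

section Spark

variable {N : ℕ} (Ω : Finset (Fin N))

theorem spark_le_card {ι : Type*} [Finite ι] (f : ι → ℝ) (hf : ∀ i, f i ∈ Set.Ico (0 : ℝ) 1)
    (hinj : Function.Injective f) (hdep : ¬ LinearIndependent ℂ fun i => aOmega Ω (f i)) :
    spark Ω ≤ Nat.card ι := by
  let e := Finite.equivFin ι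
  refine Nat.sInf_le ⟨f ∘ e.symm, fun k => hf _, hinj.comp e.symm.injective, ?_⟩
  rwa [show (fun k => aOmega Ω ((f ∘ e.symm) k)) = (fun i => aOmega Ω (f i)) ∘ e.symm from rfl,
    linearIndependent_equiv]

theorem spark_le_ncard_support {ι : Type*} [Fintype ι] (f : ι → ℝ)
    (hf : ∀ i, f i ∈ Set.Ico (0 : ℝ) 1) (hinj : Function.Injective f) (g : ι → ℂ) (hg : g ≠ 0)
    (hsum : ∑ i, g i • aOmega Ω (f i) = 0) : spark Ω ≤ (Function.support g).ncard := by
  classical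
  rw [← Nat.card_coe_set_eq]
  refine spark_le_card Ω (fun i : Function.support g => f i) (fun i => hf i)
    (hinj.comp Subtype.val_injective) ?_
  obtain ⟨i, hi⟩ := Function.ne_iff.mp hg
  refine Fintype.not_linearIndependent_iff.mpr ⟨fun i => g i, ?_, ⟨i, hi⟩, hi⟩
  rw [← hsum, ← Finset.sum_subtype {i | g i ≠ 0} (by simp) fun i => g i • aOmega Ω (f i)]
  exact Finset.sum_filter_of_ne fun i _ hi hgi => hi (by rw [hgi, zero_smul])

theorem spark_add_finrank_span_le {n : Type*} [Fintype n] (D : ℝ →₀ (n → ℂ)) (hD : D ≠ 0)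
    (hDI : ∀ x ∈ D.support, x ∈ Set.Ico (0 : ℝ) 1) (h : synthesis (aOmega Ω) D = 0) :
    spark Ω + finrank ℂ (span ℂ (D '' D.support)) ≤ #D.support + 1 := by
  set Z : Matrix D.support n ℂ := of fun x l => D x l
  have hrank : Z.rank = finrank ℂ (span ℂ (D '' D.support)) := by
    rw [rank_eq_finrank_span_row, Set.image_eq_range]
    rfl
  have hZ : Z ≠ 0 := by
    obtain ⟨x, hx⟩ := Finsupp.support_nonempty_iff.mpr hD
    exact fun hZ => Finsupp.mem_support_iff.mp hx (funext fun l => congrFun₂ hZ ⟨x, hx⟩ l)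
  have hV : LinearMap.range Z.mulVecLin ≠ ⊥ := by
    classical
    rwa [Ne, LinearMap.range_eq_bot, ← Matrix.toLin'_apply',
      map_eq_zero_iff _ Matrix.toLin'.injective]
  obtain ⟨_, ⟨w, rfl⟩, hv0, hcard⟩ :=
    (LinearMap.range Z.mulVecLin).exists_ne_zero_ncard_support_add_finrank_le hV
  have hAv : ∑ x : D.support, (Z *ᵥ w) x • aOmega Ω x = 0 := by
    have hAZ : (of fun j (x : D.support) => aOmega Ω x j) *ᵥ (Z *ᵥ w) = 0 := by
      rw [mulVec_mulVec, ← synthesis_eq_mul, h, zero_mulVec]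
    ext j
    simpa [mulVec, dotProduct, mul_comm] using congrFun hAZ j
  have hspark := spark_le_ncard_support Ω (fun x : D.support => (x : ℝ)) (fun x => hDI x x.2)
    Subtype.val_injective _ hv0 hAv
  rw [Fintype.card_coe] at hcard
  change _ + Z.rank ≤ _ at hcard
  omega

end Spark

theorem eq_of_synthesis_aOmega_eq {N : ℕ} (Ω : Finset (Fin N)) {n : Type*} [Fintype n]
    {C₁ C₂ : ℝ →₀ (n → ℂ)} (hC₁ : ∀ x ∈ C₁.support, x ∈ Set.Ico (0 : ℝ) 1)
    (hC₂ : ∀ x ∈ C₂.support, x ∈ Set.Ico (0 : ℝ) 1)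
    (h : synthesis (aOmega Ω) C₁ = synthesis (aOmega Ω) C₂)
    (hcard : #C₁.support + #C₂.support + 1 < spark Ω + (synthesis (aOmega Ω) C₁).rank) :
    C₁ = C₂ := by
  by_contra hne
  have hsupp : (C₁ - C₂).support ⊆ C₁.support ∪ C₂.support := Finsupp.support_sub
  have hspark := spark_add_finrank_span_le Ω (C₁ - C₂) (sub_ne_zero.mpr hne)
    (fun x hx => (mem_union.mp (hsupp hx)).elim (hC₁ x) (hC₂ x))
    (by rw [synthesis_sub, h, sub_self])
  have hrank := (rank_synthesis_le (aOmega Ω) C₁).trans (C₁.finrank_span_image_support_le C₂)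
  have := card_le_card hsupp
  have := card_union_add_card_inter C₁.support C₂.support
  omega

section Frequencies

variable {N L K : ℕ}

noncomputable def steering (N : ℕ) (x : ℝ) : Fin N → ℂ :=
  fun i => Complex.exp (2 * Real.pi * Complex.I * ((i : ℕ) : ℂ) * (x : ℂ))

theorem atom_eq_vecMulVec (x : ℝ) (φ : Fin L → ℂ) : atom N L x φ = vecMulVec (steering N x) φ :=
  rfl

theorem synthesis_aOmega (Ω : Finset (Fin N)) (C : ℝ →₀ (Fin L → ℂ)) :
    synthesis (aOmega Ω) C = (synthesis (steering N) C).submatrix (↑) id := by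
  rw [synthesis_submatrix]
  rfl

noncomputable def freqCoeff (c f : Fin K → ℝ) (φ : Fin K → Fin L → ℂ) : ℝ →₀ (Fin L → ℂ) :=
  ∑ k, Finsupp.single (f k) ((c k : ℂ) • φ k)

theorem sum_smul_atom_eq_synthesis (c f : Fin K → ℝ) (φ : Fin K → Fin L → ℂ) :
    ∑ k, (c k : ℂ) • atom N L (f k) (φ k) = synthesis (steering N) (freqCoeff c f φ) := by
  rw [synthesis, freqCoeff]
  have hzero : ∀ x, vecMulVec (steering N x) (0 : Fin L → ℂ) = 0 := fun x => by
    ext; simp [vecMulVec_apply]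
  refine Eq.trans ?_ (Finsupp.sum_finsetSum_index hzero fun x => vecMulVec_add (steering N x))
  simp [atom_eq_vecMulVec, vecMulVec_smul, Finsupp.sum_single_index, hzero]

theorem support_freqCoeff_subset (c f : Fin K → ℝ) (φ : Fin K → Fin L → ℂ) :
    (freqCoeff c f φ).support ⊆ univ.image f :=
  Finsupp.support_finsetSum.trans fun x hx => by
    obtain ⟨k, -, hk⟩ := mem_biUnion.mp hx
    exact mem_image.mpr ⟨k, mem_univ k, (mem_singleton.mp (Finsupp.support_single_subset hk)).symm⟩

theorem card_support_freqCoeff_le (c f : Fin K → ℝ) (φ : Fin K → Fin L → ℂ) :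
    #(freqCoeff c f φ).support ≤ K :=
  (card_le_card (support_freqCoeff_subset c f φ)).trans (card_image_le.trans (card_fin K).le)

theorem mem_Ico_of_mem_support_freqCoeff (c : Fin K → ℝ) {f : Fin K → ℝ}
    (φ : Fin K → Fin L → ℂ) (hf : ∀ k, f k ∈ Set.Ico (0 : ℝ) 1) {x : ℝ}
    (hx : x ∈ (freqCoeff c f φ).support) : x ∈ Set.Ico (0 : ℝ) 1 := by
  obtain ⟨k, -, rfl⟩ := mem_image.mp (support_freqCoeff_subset c f φ hx)
  exact hf k

theorem freqCoeff_apply_of_injective (c : Fin K → ℝ) {f : Fin K → ℝ} (φ : Fin K → Fin L → ℂ)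
    (hf : Function.Injective f) (k : Fin K) : freqCoeff c f φ (f k) = (c k : ℂ) • φ k := by
  simp [freqCoeff, Finsupp.finsetSum_apply, Finsupp.single_apply, hf.eq_iff]

theorem freqCoeff_eq_of_restrict_eq (Ω : Finset (Fin N)) {K' : ℕ} {c f : Fin K → ℝ}
    {φ : Fin K → Fin L → ℂ} {c' f' : Fin K' → ℝ} {φ' : Fin K' → Fin L → ℂ}
    {Y₀ Y : Matrix (Fin N) (Fin L) ℂ} (hY₀ : Y₀ = ∑ k, (c k : ℂ) • atom N L (f k) (φ k))
    (hY : Y = ∑ k, (c' k : ℂ) • atom N L (f' k) (φ' k))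
    (hf : ∀ k, f k ∈ Set.Ico (0 : ℝ) 1) (hf' : ∀ k, f' k ∈ Set.Ico (0 : ℝ) 1) (hK' : K' ≤ K)
    (hΩ : ∀ i ∈ Ω, ∀ l, Y i l = Y₀ i l)
    (hK : 2 * K + 1 < spark Ω + (Matrix.of fun (i : Ω) (l : Fin L) => Y₀ i l).rank) :
    freqCoeff c f φ = freqCoeff c' f' φ' := by
  have hY₀Ω : (Matrix.of fun (i : Ω) (l : Fin L) => Y₀ i l) =
      synthesis (aOmega Ω) (freqCoeff c f φ) := by
    rw [synthesis_aOmega, ← sum_smul_atom_eq_synthesis, ← hY₀]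
    rfl
  have hYΩ : (Matrix.of fun (i : Ω) (l : Fin L) => Y₀ i l) =
      synthesis (aOmega Ω) (freqCoeff c' f' φ') := by
    rw [synthesis_aOmega, ← sum_smul_atom_eq_synthesis, ← hY]
    ext i l
    exact (hΩ i i.2 l).symm
  refine eq_of_synthesis_aOmega_eq Ω (fun x => mem_Ico_of_mem_support_freqCoeff c φ hf)
    (fun x => mem_Ico_of_mem_support_freqCoeff c' φ' hf') (hY₀Ω ▸ hYΩ) ?_
  have := card_support_freqCoeff_le c f φ
  have := card_support_freqCoeff_le c' f' φ'
  rw [← hY₀Ω]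
  omega

theorem exists_synthesis_steering_eq (Y : Matrix (Fin N) (Fin L) ℂ) :
    ∃ C : ℝ →₀ (Fin L → ℂ), (∀ x ∈ C.support, x ∈ Set.Ico (0 : ℝ) 1) ∧
      synthesis (steering N) C = Y := by
  let node : Fin N → ℝ := fun k => (k : ℝ) / N
  let ζ : ℂ := Complex.exp (2 * Real.pi * Complex.I / N)
  let V : Matrix (Fin N) (Fin N) ℂ := of fun i k => steering N (node k) i
  have hV : V = (vandermonde fun k : Fin N => ζ ^ (k : ℕ))ᵀ := by
    ext i k
    simp only [V, steering, node, of_apply, transpose_apply, vandermonde_apply, ζ,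
      ← Complex.exp_nat_mul]
    congr 1
    push_cast
    ring
  have hdet : IsUnit V.det := by
    rw [isUnit_iff_ne_zero, hV, det_transpose, det_vandermonde_ne_zero_iff]
    intro a b hab
    exact Fin.ext ((Complex.isPrimitiveRoot_exp N a.pos.ne').pow_inj a.isLt b.isLt hab)
  have hnode : ∀ k, node k ∈ Set.Ico (0 : ℝ) 1 := fun k =>
    ⟨by positivity, (div_lt_one (by exact_mod_cast k.pos)).mpr (by exact_mod_cast k.isLt)⟩
  refine ⟨freqCoeff 1 node fun k => (V⁻¹ * Y) k,
    fun x => mem_Ico_of_mem_support_freqCoeff _ _ hnode, ?_⟩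
  rw [← sum_smul_atom_eq_synthesis]
  conv_rhs => rw [← mul_nonsing_inv_cancel_left V Y hdet]
  ext i l
  simp [V, atom_eq_vecMulVec, Matrix.sum_apply, vecMulVec_apply, mul_apply]

end Frequencies

section Normalization

variable {n : Type*} [Fintype n]

theorem exists_pos_smul_normalized {w : n → ℂ} (hw : w ≠ 0) :
    ∃ c : ℝ, 0 < c ∧ ∃ φ : n → ℂ, ∑ l, ‖φ l‖ ^ 2 = 1 ∧ w = (c : ℂ) • φ := by
  have hs : 0 < ∑ l, ‖w l‖ ^ 2 := by
    obtain ⟨l, hl⟩ := Function.ne_iff.mp hw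
    exact sum_pos' (fun l _ => by positivity) ⟨l, mem_univ l, by positivity⟩
  have hc : 0 < √(∑ l, ‖w l‖ ^ 2) := Real.sqrt_pos.mpr hs
  refine ⟨_, hc, ((√(∑ l, ‖w l‖ ^ 2) : ℂ)⁻¹) • w, ?_, ?_⟩
  · simp only [Pi.smul_apply, norm_smul, mul_pow, ← mul_sum, norm_inv, Complex.norm_real,
      Real.norm_of_nonneg hc.le, inv_pow, Real.sq_sqrt hs.le]
    exact inv_mul_cancel₀ hs.ne'
  · rw [smul_smul, mul_inv_cancel₀ (by exact_mod_cast hc.ne'), one_smul]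

theorem smul_ne_zero_of_normalized {c : ℝ} (hc : 0 < c) {φ : n → ℂ}
    (hφ : ∑ l, ‖φ l‖ ^ 2 = 1) : (c : ℂ) • φ ≠ 0 :=
  smul_ne_zero (Complex.ofReal_ne_zero.mpr hc.ne') fun h0 => by simp [h0] at hφ

theorem eq_and_eq_of_smul_eq_smul_of_normalized {a b : ℝ} (ha : 0 < a) (hb : 0 < b)
    {φ ψ : n → ℂ} (hφ : ∑ l, ‖φ l‖ ^ 2 = 1) (hψ : ∑ l, ‖ψ l‖ ^ 2 = 1)
    (h : (a : ℂ) • φ = (b : ℂ) • ψ) : a = b ∧ φ = ψ := by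
  have hsq : ∀ (c : ℝ) (χ : n → ℂ), ∑ l, ‖((c : ℂ) • χ) l‖ ^ 2 = c ^ 2 * ∑ l, ‖χ l‖ ^ 2 :=
    fun c χ => by simp [mul_pow, mul_sum]
  have hab : a = b := by
    have := congrArg (fun χ => ∑ l, ‖χ l‖ ^ 2) h
    simp only [hsq, hφ, hψ, mul_one] at this
    exact (sq_eq_sq₀ ha.le hb.le).mp this
  subst hab
  exact ⟨rfl, smul_right_injective _ (Complex.ofReal_ne_zero.mpr ha.ne') h⟩

end Normalization

section AtomicDecomposition

variable {N L K : ℕ}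

structure IsAtomicDecomp (N L : ℕ) (Y : Matrix (Fin N) (Fin L) ℂ) (c f : Fin K → ℝ)
    (φ : Fin K → Fin L → ℂ) : Prop where
  pos : ∀ k, 0 < c k
  mem_Ico : ∀ k, f k ∈ Set.Ico (0 : ℝ) 1
  normalized : ∀ k, ∑ l, ‖φ k l‖ ^ 2 = 1
  eq_sum : Y = ∑ k, (c k : ℂ) • atom N L (f k) (φ k)

theorem atomicL0_eq_sInf (Y : Matrix (Fin N) (Fin L) ℂ) :
    atomicL0 N L Y = sInf {K | ∃ (c f : Fin K → ℝ) (φ : Fin K → Fin L → ℂ),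
      IsAtomicDecomp N L Y c f φ} := by
  unfold atomicL0
  congr 1
  ext K
  exact ⟨fun ⟨c, f, φ, h₁, h₂, h₃, h₄⟩ => ⟨c, f, φ, h₁, h₂, h₃, h₄⟩,
    fun ⟨c, f, φ, h⟩ => ⟨c, f, φ, h.1, h.2, h.3, h.4⟩⟩

theorem IsAtomicDecomp.atomicL0_le {Y : Matrix (Fin N) (Fin L) ℂ} {c f : Fin K → ℝ}
    {φ : Fin K → Fin L → ℂ} (h : IsAtomicDecomp N L Y c f φ) : atomicL0 N L Y ≤ K := by
  rw [atomicL0_eq_sInf]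
  exact Nat.sInf_le ⟨c, f, φ, h⟩

theorem exists_isAtomicDecomp_synthesis (C : ℝ →₀ (Fin L → ℂ))
    (hC : ∀ x ∈ C.support, x ∈ Set.Ico (0 : ℝ) 1) :
    ∃ (K : ℕ) (c f : Fin K → ℝ) (φ : Fin K → Fin L → ℂ),
      IsAtomicDecomp N L (synthesis (steering N) C) c f φ := by
  let e := C.support.equivFin
  choose c hc φ hφ hCφ using fun k => exists_pos_smul_normalized
    (Finsupp.mem_support_iff.mp (e.symm k).2)
  refine ⟨_, c, fun k => e.symm k, φ, hc, fun k => hC _ (e.symm k).2, hφ, ?_⟩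
  rw [sum_smul_atom_eq_synthesis, freqCoeff]
  simp_rw [← hCφ]
  rw [e.symm.sum_comp fun x : C.support => Finsupp.single (x : ℝ) (C x),
    sum_coe_sort C.support fun x => Finsupp.single x (C x)]
  exact congrArg _ C.sum_single.symm

theorem exists_isAtomicDecomp_atomicL0 (Y : Matrix (Fin N) (Fin L) ℂ) :
    ∃ (c f : Fin (atomicL0 N L Y) → ℝ) (φ : Fin (atomicL0 N L Y) → Fin L → ℂ),
      IsAtomicDecomp N L Y c f φ := by
  obtain ⟨C, hC, rfl⟩ := exists_synthesis_steering_eq (N := N) Y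
  obtain ⟨K, c, f, φ, h⟩ := exists_isAtomicDecomp_synthesis (N := N) C hC
  rw [atomicL0_eq_sInf]
  exact Nat.sInf_mem (s := {K | ∃ (c f : Fin K → ℝ) (φ : Fin K → Fin L → ℂ),
    IsAtomicDecomp N L _ c f φ}) ⟨K, c, f, φ, h⟩

end AtomicDecomposition

section Uniqueness

variable {L K K' : ℕ} {c f : Fin K → ℝ} {φ : Fin K → Fin L → ℂ} {c' f' : Fin K' → ℝ}
  {φ' : Fin K' → Fin L → ℂ}

theorem range_subset_of_freqCoeff_eq (hc : ∀ k, 0 < c k) (hφ : ∀ k, ∑ l, ‖φ k l‖ ^ 2 = 1)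
    (hf : Function.Injective f) (h : freqCoeff c f φ = freqCoeff c' f' φ') :
    Set.range f ⊆ Set.range f' := by
  rintro _ ⟨k, rfl⟩
  have hk : f k ∈ (freqCoeff c' f' φ').support := by
    rw [Finsupp.mem_support_iff, ← h, freqCoeff_apply_of_injective c φ hf]
    exact smul_ne_zero_of_normalized (hc k) (hφ k)
  simpa using support_freqCoeff_subset c' f' φ' hk

theorem card_le_of_freqCoeff_eq (hc : ∀ k, 0 < c k) (hφ : ∀ k, ∑ l, ‖φ k l‖ ^ 2 = 1)
    (hf : Function.Injective f) (h : freqCoeff c f φ = freqCoeff c' f' φ') : K ≤ K' := by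
  choose g hg using fun k => range_subset_of_freqCoeff_eq hc hφ hf h ⟨k, rfl⟩
  simpa using Fintype.card_le_of_injective g fun a b hab => hf (by rw [← hg a, ← hg b, hab])

theorem exists_perm_of_freqCoeff_eq {c' f' : Fin K → ℝ} {φ' : Fin K → Fin L → ℂ}
    (hc : ∀ k, 0 < c k) (hφ : ∀ k, ∑ l, ‖φ k l‖ ^ 2 = 1) (hf : Function.Injective f)
    (hc' : ∀ k, 0 < c' k) (hφ' : ∀ k, ∑ l, ‖φ' k l‖ ^ 2 = 1) (hf' : Function.Injective f')
    (h : freqCoeff c f φ = freqCoeff c' f' φ') :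
    ∃ σ : Equiv.Perm (Fin K), ∀ k, c' k = c (σ k) ∧ f' k = f (σ k) ∧ φ' k = φ (σ k) := by
  have hrange : Set.range f' = Set.range f :=
    (range_subset_of_freqCoeff_eq hc' hφ' hf' h.symm).antisymm
      (range_subset_of_freqCoeff_eq hc hφ hf h)
  let σ := (Equiv.ofInjective f' hf').trans
    ((Equiv.setCongr hrange).trans (Equiv.ofInjective f hf).symm)
  have hσ : ∀ k, f (σ k) = f' k := fun k => Equiv.apply_ofInjective_symm hf _
  refine ⟨σ, fun k => ?_⟩
  have hcoeff : (c' k : ℂ) • φ' k = (c (σ k) : ℂ) • φ (σ k) := by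
    rw [← freqCoeff_apply_of_injective c' φ' hf', ← h, ← hσ k,
      freqCoeff_apply_of_injective c φ hf]
  obtain ⟨hck, hφk⟩ := eq_and_eq_of_smul_eq_smul_of_normalized (hc' k) (hc _) (hφ' k) (hφ _)
    hcoeff
  exact ⟨hck, (hσ k).symm, hφk⟩

end Uniqueness

/-- (Exact recovery via atomic `ℓ₀` minimization) If `Y° = Σ c_j a(f_j) φ_j` with
`2K < spark(𝒜_Ω) − 1 + rank(Y°_Ω)`, then `Y°` is the unique minimizer of the atomic `ℓ₀`
norm subject to agreeing with `Y°` on `Ω`, `‖Y°‖_{𝒜,0} = K`, and the atomic decomposition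
of order `K` is unique (up to permutation of the atoms). -/
theorem stmt11 (N L K : ℕ) (Ω : Finset (Fin N))
    (c : Fin K → ℝ) (f : Fin K → ℝ) (φ : Fin K → Fin L → ℂ)
    (hc : ∀ k, 0 < c k) (hf : ∀ k, f k ∈ Set.Ico (0 : ℝ) 1)
    (hinj : Function.Injective f) (hφ : ∀ k, ∑ l, ‖φ k l‖ ^ 2 = 1)
    (Y₀ : Matrix (Fin N) (Fin L) ℂ)
    (hY₀ : Y₀ = ∑ k, (c k : ℂ) • atom N L (f k) (φ k))
    (hK : 2 * K + 1 < spark Ω + (Matrix.of fun (i : Ω) (l : Fin L) => Y₀ i l).rank) :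
    (∀ Y : Matrix (Fin N) (Fin L) ℂ, (∀ i ∈ Ω, ∀ l, Y i l = Y₀ i l) →
      atomicL0 N L Y ≤ atomicL0 N L Y₀ → Y = Y₀) ∧
    atomicL0 N L Y₀ = K ∧
    (∀ (c' : Fin K → ℝ) (f' : Fin K → ℝ) (φ' : Fin K → Fin L → ℂ),
      (∀ k, 0 < c' k) → (∀ k, f' k ∈ Set.Ico (0 : ℝ) 1) → Function.Injective f' →
      (∀ k, ∑ l, ‖φ' k l‖ ^ 2 = 1) →
      Y₀ = ∑ k, (c' k : ℂ) • atom N L (f' k) (φ' k) →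
      ∃ σ : Equiv.Perm (Fin K), ∀ k, c' k = c (σ k) ∧ f' k = f (σ k) ∧ φ' k = φ (σ k)) := by
  have hd₀ : IsAtomicDecomp N L Y₀ c f φ := ⟨hc, hf, hφ, hY₀⟩
  have hcoeff : ∀ {Y : Matrix (Fin N) (Fin L) ℂ} {K' : ℕ} {c' f' : Fin K' → ℝ}
      {φ' : Fin K' → Fin L → ℂ}, (∀ i ∈ Ω, ∀ l, Y i l = Y₀ i l) →
      IsAtomicDecomp N L Y c' f' φ' → K' ≤ K → freqCoeff c f φ = freqCoeff c' f' φ' :=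
    fun hΩ hd hK' => freqCoeff_eq_of_restrict_eq Ω hY₀ hd.eq_sum hf hd.mem_Ico hK' hΩ hK
  have hL0 : atomicL0 N L Y₀ = K := by
    refine le_antisymm hd₀.atomicL0_le ?_
    obtain ⟨c', f', φ', hd⟩ := exists_isAtomicDecomp_atomicL0 Y₀
    exact card_le_of_freqCoeff_eq hc hφ hinj (hcoeff (fun _ _ _ => rfl) hd hd₀.atomicL0_le)
  refine ⟨fun Y hΩ hY => ?_, hL0, fun c' f' φ' hc' hf' hinj' hφ' hY => ?_⟩
  · obtain ⟨c', f', φ', hd⟩ := exists_isAtomicDecomp_atomicL0 Y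
    rw [hd.eq_sum, hY₀, sum_smul_atom_eq_synthesis, sum_smul_atom_eq_synthesis,
      hcoeff hΩ hd (hL0 ▸ hY)]
  · exact exists_perm_of_freqCoeff_eq hc hφ hinj hc' hφ' hinj'
      (hcoeff (fun _ _ _ => rfl) ⟨hc', hf', hφ', hY⟩ le_rfl)
end

section
/- (Semidefinite characterization of the MMV atomic norm) For Y ∈ ℂ^{N×L}, the atomic norm ‖Y‖_𝒜 = inf{Σ_k c_k : Y = Σ_k c_k a(f_k)φ_k, c_k > 0, f_k ∈ [0,1), ‖φ_k‖₂ = 1} equals the optimal value of the SDP: minimize (1/(2√N)) tr(U) over positive semidefinite Hermitian U = [[W, Yᴴ],[Y, T(u)]] with T(u) Hermitian Toeplitz. -/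
/-!
A positive semidefinite matrix `[[W, Yᴴ], [Y, T]]` is the Gram matrix of vectors `p_l`, `g_i`:
`Y i l = ⟪g_i, p_l⟫`, `T = gram g`, and its trace is `∑ ‖p_l‖² + ∑ ‖g_i‖²`.

An atomic decomposition `Y = ∑ c_k a(f_k) φ_kᵀ` yields such vectors in `ℂ^K`, namely
`p_l = (√(c_k √N) φ_k l)_k` and `g_i = (√(c_k / √N) conj a_i(f_k))_k`; then `gram g` is Toeplitz
and both `∑ ‖p_l‖²` and `∑ ‖g_i‖²` equal `√N ∑ c_k`.

Conversely, if `gram g` is Toeplitz then `(g_0, …, g_{N-2})` and `(g_1, …, g_{N-1})` have the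
same Gram matrix, so a unitary `U` maps `g_i` to `g_{i+1}`. In an orthonormal eigenbasis `b_j` of
`U`, with eigenvalues `μ_j` on the unit circle, `⟪b_j, g_i⟫ = μ_j ^ i β_j` (the Vandermonde
decomposition of `T`), and Parseval gives the atomic decomposition
`Y i l = ∑_j conj μ_j ^ i · conj β_j ⟪b_j, p_l⟫` of cost `∑_j |β_j| ‖γ_j‖`, `γ_j = (⟪b_j, p_l⟫)_l`.
By AM–GM, `|β_j| ‖γ_j‖ ≤ (‖γ_j‖² + N |β_j|²) / (2√N)`, and the sum over `j` of the right-hand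
side is the SDP objective `(∑ ‖p_l‖² + ∑ ‖g_i‖²) / (2√N)`.
-/

open Matrix ComplexOrder

/-- The MMV atomic norm of `Y`. -/
noncomputable def atomicNorm (N L : ℕ) (Y : Matrix (Fin N) (Fin L) ℂ) : ℝ :=
  sInf {t : ℝ | ∃ (K : ℕ) (c : Fin K → ℝ) (f : Fin K → ℝ) (φ : Fin K → Fin L → ℂ),
    (∀ k, 0 < c k) ∧ (∀ k, f k ∈ Set.Ico (0 : ℝ) 1) ∧
    (∀ k, ∑ l, ‖φ k l‖ ^ 2 = 1) ∧
    Y = ∑ k, (c k : ℂ) • atom N L (f k) (φ k) ∧ t = ∑ k, c k}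

/-- A matrix is Toeplitz if its entries are constant along diagonals. -/
def IsToeplitz {N : ℕ} (T : Matrix (Fin N) (Fin N) ℂ) : Prop :=
  ∀ i j i' j' : Fin N, (i : ℕ) + (j' : ℕ) = (i' : ℕ) + (j : ℕ) → T i j = T i' j'

open Module
open scoped InnerProductSpace

section
variable {𝕜 E : Type*} [RCLike 𝕜] [NormedAddCommGroup E] [InnerProductSpace 𝕜 E]

theorem LinearIsometryEquiv.inner_apply_eq_mul_inner (U : E ≃ₗᵢ[𝕜] E) {μ : 𝕜} {b : E}
    (hb : U b = μ • b) (hμ : ‖μ‖ = 1) (x : E) : ⟪b, U x⟫_𝕜 = μ * ⟪b, x⟫_𝕜 := by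
  have h := U.inner_map_map b x
  rw [hb, inner_smul_left] at h
  have hμ' : μ * (starRingEnd 𝕜) μ = 1 := by
    rw [RCLike.mul_conj, hμ]; norm_num
  calc ⟪b, U x⟫_𝕜 = μ * ((starRingEnd 𝕜) μ * ⟪b, U x⟫_𝕜) := by rw [← mul_assoc, hμ', one_mul]
    _ = μ * ⟪b, x⟫_𝕜 := by rw [h]

variable [FiniteDimensional 𝕜 E]

theorem exists_linearIsometryEquiv_apply_eq_of_inner_eq {ι : Type*} [Fintype ι] {v w : ι → E}
    (h : ∀ i j, ⟪v i, v j⟫_𝕜 = ⟪w i, w j⟫_𝕜) : ∃ U : E ≃ₗᵢ[𝕜] E, ∀ i, U (v i) = w i := by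
  classical
  set A := Fintype.linearCombination 𝕜 v
  set B := Fintype.linearCombination 𝕜 w
  have hAB : ∀ x, ‖B x‖ = ‖A x‖ := by
    intro x
    have : ⟪B x, B x⟫_𝕜 = ⟪A x, A x⟫_𝕜 := by
      simp only [A, B, Fintype.linearCombination_apply, inner_sum, sum_inner, inner_smul_left,
        inner_smul_right, h]
    rw [@norm_eq_sqrt_re_inner 𝕜, this, ← @norm_eq_sqrt_re_inner 𝕜]
  have hker : LinearMap.ker A ≤ LinearMap.ker B := fun x hx => by
    rw [LinearMap.mem_ker, ← norm_eq_zero, hAB, norm_eq_zero]; exact hx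
  have hC : ∀ x, (LinearMap.ker A).liftQ B hker (A.quotKerEquivRange.symm
      ⟨A x, LinearMap.mem_range_self A x⟩) = B x := fun x => by
    rw [LinearMap.quotKerEquivRange_symm_apply_image]; rfl
  let C : LinearMap.range A →ₗᵢ[𝕜] E :=
    { toLinearMap := (LinearMap.ker A).liftQ B hker ∘ₗ A.quotKerEquivRange.symm.toLinearMap
      norm_map' := by
        rintro ⟨_, x, rfl⟩
        simp only [LinearMap.coe_comp, LinearEquiv.coe_coe, Function.comp_apply, hC, hAB]
        rfl }
  have hCA : ∀ x, C.extend (A x) = B x := fun x =>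
    (C.extend_apply ⟨A x, LinearMap.mem_range_self A x⟩).trans (hC x)
  refine ⟨C.extend.toLinearIsometryEquiv rfl, fun i => ?_⟩
  simpa [A, B] using hCA (Pi.single i 1)

end

section
variable {E : Type*} [NormedAddCommGroup E] [InnerProductSpace ℂ E] [FiniteDimensional ℂ E]
open ComplexStarModule Module.End

theorem LinearMap.exists_orthonormalBasis_apply_eq_smul_of_isStarNormal
    (T : E →ₗ[ℂ] E) [IsStarNormal T] :
    ∃ (b : OrthonormalBasis (Fin (finrank ℂ E)) ℂ E) (μ : Fin (finrank ℂ E) → ℂ),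
      ∀ j, T (b j) = μ j • b j := by
  classical
  set A : E →ₗ[ℂ] E := (ℜ T : E →ₗ[ℂ] E)
  set B : E →ₗ[ℂ] E := (ℑ T : E →ₗ[ℂ] E)
  have hT : T = A + Complex.I • B := (realPart_add_I_smul_imaginaryPart T).symm
  have hA : A.IsSymmetric := (LinearMap.isSymmetric_iff_isSelfAdjoint _).mpr (ℜ T).2
  have hB : B.IsSymmetric := (LinearMap.isSymmetric_iff_isSelfAdjoint _).mpr (ℑ T).2
  -- `A` and `B` commute because `T` is normal, so they have a common orthonormal eigenbasis.
  have hV := hA.directSum_isInternal_of_commute hB (Commute.realPart_imaginaryPart T)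
  let _ := hV.submodule_iSupIndep.fintypeNeBotOfFiniteDimensional
  have hV' := DirectSum.isInternal_ne_bot_iff.mpr hV
  have hO := (hA.orthogonalFamily_eigenspace_inf_eigenspace hB).comp
    (Subtype.coe_injective (p := fun μ : ℂ × ℂ => eigenspace A μ.2 ⊓ eigenspace B μ.1 ≠ ⊥))
  let μ := fun j => (hV'.subordinateOrthonormalBasisIndex rfl j hO).1
  refine ⟨hV'.subordinateOrthonormalBasis rfl hO, fun j => (μ j).2 + Complex.I * (μ j).1,
    fun j => ?_⟩
  obtain ⟨hAj, hBj⟩ := hV'.subordinateOrthonormalBasis_subordinate rfl j hO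
  rw [SetLike.mem_coe, mem_eigenspace_iff] at hAj hBj
  rw [hT, LinearMap.add_apply, LinearMap.smul_apply, hAj, hBj, smul_smul, add_smul]

theorem LinearIsometryEquiv.isStarNormal_toLinearMap (U : E ≃ₗᵢ[ℂ] E) :
    IsStarNormal U.toLinearMap := by
  refine ⟨?_⟩
  rw [LinearMap.star_eq_adjoint, U.adjoint_toLinearMap_eq_symm, commute_iff_eq]
  ext x
  simp

theorem LinearIsometryEquiv.exists_orthonormalBasis_apply_eq_smul (U : E ≃ₗᵢ[ℂ] E) :
    ∃ (b : OrthonormalBasis (Fin (finrank ℂ E)) ℂ E) (μ : Fin (finrank ℂ E) → ℂ),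
      (∀ j, ‖μ j‖ = 1) ∧ ∀ j, U (b j) = μ j • b j := by
  have := U.isStarNormal_toLinearMap
  obtain ⟨b, μ, hb⟩ := U.toLinearMap.exists_orthonormalBasis_apply_eq_smul_of_isStarNormal
  refine ⟨b, μ, fun j => ?_, hb⟩
  have h := U.norm_map (b j)
  rwa [show U (b j) = μ j • b j from hb j, norm_smul, b.orthonormal.1 j, mul_one] at h

theorem exists_orthonormalBasis_inner_eq_pow_mul_of_isToeplitz {N : ℕ} {g : Fin N → E}
    (hg : IsToeplitz (gram ℂ g)) :
    ∃ (b : OrthonormalBasis (Fin (finrank ℂ E)) ℂ E) (μ β : Fin (finrank ℂ E) → ℂ),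
      (∀ j, ‖μ j‖ = 1) ∧ ∀ j (i : Fin N), ⟪b j, g i⟫_ℂ = μ j ^ (i : ℕ) * β j := by
  cases N with
  | zero => exact ⟨stdOrthonormalBasis ℂ E, 1, 0, fun _ => norm_one, fun _ i => i.elim0⟩
  | succ m =>
    obtain ⟨U, hU⟩ := exists_linearIsometryEquiv_apply_eq_of_inner_eq
      (v := g ∘ Fin.castSucc) (w := g ∘ Fin.succ) fun p q =>
        hg p.castSucc q.castSucc p.succ q.succ
          (by simp only [Fin.val_castSucc, Fin.val_succ]; omega)
    obtain ⟨b, μ, hμ, hb⟩ := U.exists_orthonormalBasis_apply_eq_smul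
    refine ⟨b, μ, fun j => ⟪b j, g 0⟫_ℂ, hμ, fun j i => ?_⟩
    induction i using Fin.induction with
    | zero => simp
    | succ i ih =>
      rw [show g i.succ = U (g i.castSucc) from (hU i).symm,
        U.inner_apply_eq_mul_inner (hb j) (hμ j), ih, Fin.val_succ, Fin.val_castSucc, pow_succ',
        mul_assoc]

end

open scoped MatrixOrder in
theorem Matrix.PosSemidef.exists_eq_gram {n : Type*} [Fintype n] {M : Matrix n n ℂ}
    (hM : M.PosSemidef) : ∃ v : n → EuclideanSpace ℂ n, M = gram ℂ v := by
  classical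
  obtain ⟨B, rfl⟩ := CStarAlgebra.nonneg_iff_eq_star_mul_self.mp hM.nonneg
  refine ⟨fun j => WithLp.toLp 2 (Bᵀ j), ?_⟩
  ext i j
  simp [gram_apply, EuclideanSpace.inner_eq_star_dotProduct, mul_apply, dotProduct, mul_comm]

theorem Matrix.gram_sumElim {𝕜 E m n : Type*} [RCLike 𝕜] [SeminormedAddCommGroup E]
    [InnerProductSpace 𝕜 E] (p : m → E) (g : n → E) :
    gram 𝕜 (Sum.elim p g) =
      fromBlocks (gram 𝕜 p) (of fun l i => ⟪p l, g i⟫_𝕜) (of fun i l => ⟪g i, p l⟫_𝕜)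
        (gram 𝕜 g) := by
  ext (_ | _) (_ | _) <;> rfl

theorem Matrix.re_trace_gram {𝕜 E n : Type*} [RCLike 𝕜] [SeminormedAddCommGroup E]
    [InnerProductSpace 𝕜 E] [Fintype n] (v : n → E) :
    RCLike.re (gram 𝕜 v).trace = ∑ i, ‖v i‖ ^ 2 := by
  simp [trace, gram_apply]

theorem Complex.exists_mem_Ico_exp_eq {z : ℂ} (hz : ‖z‖ = 1) :
    ∃ f ∈ Set.Ico (0 : ℝ) 1, Complex.exp (2 * Real.pi * Complex.I * f) = z := by
  refine ⟨Int.fract (z.arg / (2 * Real.pi)), ⟨Int.fract_nonneg _, Int.fract_lt_one _⟩, ?_⟩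
  have hexp : (2 * Real.pi * Complex.I * (Int.fract (z.arg / (2 * Real.pi)) : ℝ) : ℂ) =
      z.arg * Complex.I - ⌊z.arg / (2 * Real.pi)⌋ * (2 * Real.pi * Complex.I) := by
    rw [Int.fract]
    push_cast
    field_simp
  have harg : Complex.exp (z.arg * Complex.I) = z := by
    simpa [hz] using Complex.norm_mul_exp_arg_mul_I z
  rw [hexp, Complex.exp_sub, Complex.exp_int_mul_two_pi_mul_I, div_one, harg]

theorem Complex.exp_two_pi_I_mul_natCast_mul (n : ℕ) (f : ℝ) :
    Complex.exp (2 * Real.pi * Complex.I * n * f) =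
      Complex.exp (2 * Real.pi * Complex.I * f) ^ n := by
  rw [← Complex.exp_nat_mul]
  ring_nf

theorem Complex.exp_two_pi_I_mul_conj_eq_of_add_eq {a b a' b' : ℕ} (h : a + b' = a' + b)
    (f : ℝ) :
    Complex.exp (2 * Real.pi * Complex.I * a * f) *
        (starRingEnd ℂ) (Complex.exp (2 * Real.pi * Complex.I * b * f)) =
      Complex.exp (2 * Real.pi * Complex.I * a' * f) *
        (starRingEnd ℂ) (Complex.exp (2 * Real.pi * Complex.I * b' * f)) := by
  simp only [← Complex.exp_conj, map_mul, map_ofNat, Complex.conj_ofReal, Complex.conj_I,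
    map_natCast, ← Complex.exp_add]
  congr 1
  have h' : (a : ℂ) + b' = a' + b := by exact_mod_cast h
  linear_combination (2 * Real.pi * Complex.I * f : ℂ) * h'

theorem mul_le_sq_add_mul_sq_div {x : ℝ} (hx : 0 < x) (a b : ℝ) :
    a * b ≤ (b ^ 2 + x * a ^ 2) / (2 * Real.sqrt x) := by
  rw [le_div_iff₀ (by positivity)]
  nlinarith [sq_nonneg (b - Real.sqrt x * a), Real.sq_sqrt hx.le]

def atomicCosts (N L : ℕ) (Y : Matrix (Fin N) (Fin L) ℂ) : Set ℝ :=
  {t : ℝ | ∃ (K : ℕ) (c : Fin K → ℝ) (f : Fin K → ℝ) (φ : Fin K → Fin L → ℂ),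
    (∀ k, 0 < c k) ∧ (∀ k, f k ∈ Set.Ico (0 : ℝ) 1) ∧
    (∀ k, ∑ l, ‖φ k l‖ ^ 2 = 1) ∧
    Y = ∑ k, (c k : ℂ) • atom N L (f k) (φ k) ∧ t = ∑ k, c k}

def sdpValues (N L : ℕ) (Y : Matrix (Fin N) (Fin L) ℂ) : Set ℝ :=
  {v : ℝ | ∃ (W : Matrix (Fin L) (Fin L) ℂ) (Tm : Matrix (Fin N) (Fin N) ℂ),
    IsToeplitz Tm ∧
    (Matrix.fromBlocks W Yᴴ Y Tm).PosSemidef ∧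
    v = (1 / (2 * Real.sqrt N)) * ((Matrix.fromBlocks W Yᴴ Y Tm).trace).re}

section
variable {N L : ℕ} {Y : Matrix (Fin N) (Fin L) ℂ}

theorem sum_mem_atomicCosts {ι : Type*} [Fintype ι] (c f : ι → ℝ) (φ : ι → Fin L → ℂ)
    (hc : ∀ k, 0 < c k) (hf : ∀ k, f k ∈ Set.Ico (0 : ℝ) 1) (hφ : ∀ k, ∑ l, ‖φ k l‖ ^ 2 = 1)
    (hY : Y = ∑ k, (c k : ℂ) • atom N L (f k) (φ k)) : ∑ k, c k ∈ atomicCosts N L Y := by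
  let e := (Fintype.equivFin ι).symm
  refine ⟨Fintype.card ι, c ∘ e, f ∘ e, φ ∘ e, fun k => hc _, fun k => hf _, fun k => hφ _, ?_, ?_⟩
  · rw [hY]
    exact (e.sum_comp fun k => (c k : ℂ) • atom N L (f k) (φ k)).symm
  · exact (e.sum_comp c).symm

theorem sum_norm_mem_atomicCosts {ι : Type*} [Fintype ι] (z : ι → ℂ) (hz : ∀ k, ‖z k‖ = 1)
    (ψ : ι → EuclideanSpace ℂ (Fin L)) (hY : ∀ i l, Y i l = ∑ k, z k ^ (i : ℕ) * ψ k l) :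
    ∑ k, ‖ψ k‖ ∈ atomicCosts N L Y := by
  classical
  choose f hf hfz using fun k => Complex.exists_mem_Ico_exp_eq (hz k)
  have sum_nonzero {M : Type} [AddCommMonoid M] (F : ι → M) (hF : ∀ k, ψ k = 0 → F k = 0) :
      ∑ k : {k // ψ k ≠ 0}, F k = ∑ k, F k := by
    rw [← Finset.sum_subtype (Finset.univ.filter (ψ · ≠ 0)) (by simp), Finset.sum_filter_of_ne]
    exact fun k _ hk hψ => hk (hF k hψ)
  rw [← sum_nonzero _ fun k hk => by simp [hk]]
  refine sum_mem_atomicCosts (ι := {k // ψ k ≠ 0}) (fun k => ‖ψ k‖) (fun k => f k)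
    (fun k => ((‖ψ k‖⁻¹ : ℂ) • ψ k).ofLp) (fun k => norm_pos_iff.mpr k.2) (fun k => hf k)
    (fun k => ?_) ?_
  · rw [← EuclideanSpace.norm_sq_eq, norm_smul, norm_inv, Complex.norm_real, norm_norm,
      inv_mul_cancel₀ (norm_ne_zero_iff.mpr k.2), one_pow]
  · ext i l
    rw [hY, ← sum_nonzero _ fun k hk => by simp [hk], Matrix.sum_apply]
    refine Finset.sum_congr rfl fun k _ => ?_
    have hψ : (‖ψ k‖ : ℂ) ≠ 0 := Complex.ofReal_ne_zero.mpr (norm_ne_zero_iff.mpr k.2)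
    simp only [Matrix.smul_apply, atom, Matrix.of_apply, smul_eq_mul, WithLp.ofLp_smul,
      Pi.smul_apply, Complex.exp_two_pi_I_mul_natCast_mul, hfz]
    field_simp

theorem mem_sdpValues_of_inner_eq {E : Type*} [NormedAddCommGroup E] [InnerProductSpace ℂ E]
    (p : Fin L → E) (g : Fin N → E) (hY : ∀ i l, Y i l = ⟪g i, p l⟫_ℂ)
    (hg : IsToeplitz (gram ℂ g)) :
    (1 / (2 * Real.sqrt N)) * (∑ l, ‖p l‖ ^ 2 + ∑ i, ‖g i‖ ^ 2) ∈ sdpValues N L Y := by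
  have hM : fromBlocks (gram ℂ p) Yᴴ Y (gram ℂ g) = gram ℂ (Sum.elim p g) := by
    rw [gram_sumElim]
    congr 1 <;> ext <;> simp [hY]
  refine ⟨gram ℂ p, gram ℂ g, hg, hM ▸ posSemidef_gram ℂ _, ?_⟩
  rw [hM, ← RCLike.re_eq_complex_re, re_trace_gram, Fintype.sum_sum_type]
  rfl

theorem exists_inner_eq_of_mem_sdpValues {v : ℝ} (hv : v ∈ sdpValues N L Y) :
    ∃ (p : Fin L → EuclideanSpace ℂ (Fin L ⊕ Fin N))
      (g : Fin N → EuclideanSpace ℂ (Fin L ⊕ Fin N)),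
      (∀ i l, Y i l = ⟪g i, p l⟫_ℂ) ∧ IsToeplitz (gram ℂ g) ∧
      v = (1 / (2 * Real.sqrt N)) * (∑ l, ‖p l‖ ^ 2 + ∑ i, ‖g i‖ ^ 2) := by
  obtain ⟨W, Tm, hT, hM, rfl⟩ := hv
  obtain ⟨w, hw⟩ := hM.exists_eq_gram
  have hblocks := hw
  rw [← Sum.elim_comp_inl_inr w, gram_sumElim] at hblocks
  obtain ⟨-, -, hY, rfl⟩ := fromBlocks_inj.mp hblocks
  refine ⟨w ∘ Sum.inl, w ∘ Sum.inr, fun i l => by rw [hY]; rfl, hT, ?_⟩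
  rw [hw, ← RCLike.re_eq_complex_re, re_trace_gram, Fintype.sum_sum_type]
  rfl

theorem exists_inner_eq_of_mem_atomicCosts {t : ℝ} (ht : t ∈ atomicCosts N L Y) :
    ∃ (K : ℕ) (p : Fin L → EuclideanSpace ℂ (Fin K)) (g : Fin N → EuclideanSpace ℂ (Fin K)),
      (∀ i l, Y i l = ⟪g i, p l⟫_ℂ) ∧ IsToeplitz (gram ℂ g) ∧
      ∑ l, ‖p l‖ ^ 2 = Real.sqrt N * t ∧ ∑ i, ‖g i‖ ^ 2 = Real.sqrt N * t := by
  obtain ⟨K, c, f, φ, hc, -, hφ, rfl, rfl⟩ := ht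
  set s := Real.sqrt N with hs
  have hs0 : 0 ≤ s := Real.sqrt_nonneg _
  let a : Fin N → Fin K → ℂ := fun i k => Complex.exp (2 * Real.pi * Complex.I * (i : ℕ) * f k)
  have ha : ∀ i k, ‖a i k‖ = 1 := fun i k => by
    rw [Complex.norm_exp]; simp
  let p : Fin L → EuclideanSpace ℂ (Fin K) := fun l =>
    WithLp.toLp 2 fun k => (Real.sqrt (c k * s) : ℂ) * φ k l
  let g : Fin N → EuclideanSpace ℂ (Fin K) := fun i =>
    WithLp.toLp 2 fun k => (Real.sqrt (c k / s) : ℂ) * (starRingEnd ℂ) (a i k)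
  refine ⟨K, p, g, fun i l => ?_, fun i j i' j' hij => ?_, ?_, ?_⟩
  · have hs_pos : 0 < s := Real.sqrt_pos.mpr (by exact_mod_cast i.pos)
    rw [EuclideanSpace.inner_eq_star_dotProduct, Matrix.sum_apply]
    refine Finset.sum_congr rfl fun k _ => ?_
    have hsq : (Real.sqrt (c k * s) : ℂ) * Real.sqrt (c k / s) = c k := by
      rw [← Complex.ofReal_mul, ← Real.sqrt_mul (mul_pos (hc k) hs_pos).le,
        show c k * s * (c k / s) = c k ^ 2 by field_simp, Real.sqrt_sq (hc k).le]
    simp only [p, g, a, Matrix.smul_apply, atom, Matrix.of_apply, smul_eq_mul, Pi.star_apply,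
      RCLike.star_def, map_mul, Complex.conj_ofReal, Complex.conj_conj]
    linear_combination (a i k * φ k l) * hsq.symm
  · rw [gram_apply, gram_apply, EuclideanSpace.inner_eq_star_dotProduct,
      EuclideanSpace.inner_eq_star_dotProduct]
    refine Finset.sum_congr rfl fun k _ => ?_
    simp only [g, a, Pi.star_apply, RCLike.star_def, map_mul, Complex.conj_ofReal,
      Complex.conj_conj]
    linear_combination
      (Real.sqrt (c k / s) : ℂ) ^ 2 * Complex.exp_two_pi_I_mul_conj_eq_of_add_eq hij (f k)
  · simp only [p, EuclideanSpace.norm_sq_eq, norm_mul, Complex.norm_real, Real.norm_eq_abs,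
      mul_pow, sq_abs, Real.sq_sqrt (mul_nonneg (hc _).le hs0)]
    rw [Finset.sum_comm, Finset.mul_sum]
    refine Finset.sum_congr rfl fun k _ => ?_
    rw [← Finset.mul_sum, hφ k]
    ring
  · simp only [g, EuclideanSpace.norm_sq_eq, norm_mul, Complex.norm_real, Real.norm_eq_abs,
      sq_abs, Real.sq_sqrt (div_nonneg (hc _).le hs0), Complex.norm_conj, ha, mul_one,
      Finset.sum_const, Finset.card_univ, Fintype.card_fin, nsmul_eq_mul]
    rw [← Finset.sum_div, ← mul_div_assoc, mul_div_right_comm, hs, Real.div_sqrt]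

theorem exists_mem_sdpValues_le_of_mem_atomicCosts {t : ℝ} (ht : t ∈ atomicCosts N L Y) :
    ∃ v ∈ sdpValues N L Y, v ≤ t := by
  obtain ⟨K, p, g, hY, hg, hp, hgt⟩ := exists_inner_eq_of_mem_atomicCosts ht
  refine ⟨_, mem_sdpValues_of_inner_eq p g hY hg, ?_⟩
  have ht0 : 0 ≤ t := by
    obtain ⟨K, c, -, -, hc, -, -, -, rfl⟩ := ht
    exact Finset.sum_nonneg fun k _ => (hc k).le
  rw [hp, hgt]
  rcases (Real.sqrt_nonneg (N : ℝ)).eq_or_lt with h0 | hpos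
  -- For `N = 0` the objective is `0`, since `1 / 0 = 0`.
  · simp [← h0, ht0]
  · field_simp
    linarith

theorem exists_mem_atomicCosts_le_of_mem_sdpValues {v : ℝ} (hv : v ∈ sdpValues N L Y) :
    ∃ t ∈ atomicCosts N L Y, t ≤ v := by
  obtain ⟨p, g, hY, hg, rfl⟩ := exists_inner_eq_of_mem_sdpValues hv
  rcases N.eq_zero_or_pos with rfl | hN
  · refine ⟨0, ⟨0, 0, 0, 0, fun k => k.elim0, fun k => k.elim0, fun k => k.elim0, ?_, by simp⟩,
      by simp⟩
    ext i
    exact i.elim0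
  obtain ⟨b, μ, β, hμ, hbg⟩ := exists_orthonormalBasis_inner_eq_pow_mul_of_isToeplitz hg
  let γ : Fin _ → EuclideanSpace ℂ (Fin L) := fun j => WithLp.toLp 2 fun l => ⟪b j, p l⟫_ℂ
  refine ⟨_, sum_norm_mem_atomicCosts (fun j => (starRingEnd ℂ) (μ j)) (by simpa using hμ)
    (fun j => (starRingEnd ℂ) (β j) • γ j) (fun i l => ?_), ?_⟩
  · rw [hY, ← b.sum_inner_mul_inner]
    refine Finset.sum_congr rfl fun j _ => ?_
    rw [← inner_conj_symm, hbg]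
    simp only [map_mul, map_pow, PiLp.smul_apply, smul_eq_mul, γ]
    ring
  have hγ : ∑ j, ‖γ j‖ ^ 2 = ∑ l, ‖p l‖ ^ 2 := by
    rw [Finset.sum_congr rfl fun j _ => EuclideanSpace.norm_sq_eq (γ j), Finset.sum_comm]
    exact Finset.sum_congr rfl fun l _ => b.sum_sq_norm_inner_right (p l)
  have hβ : ∑ i, ‖g i‖ ^ 2 = N * ∑ j, ‖β j‖ ^ 2 := by
    simp only [← b.sum_sq_norm_inner_right (g _), hbg, norm_mul, norm_pow, hμ, one_pow, one_mul,
      Finset.sum_const, Finset.card_univ, Fintype.card_fin, nsmul_eq_mul]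
  calc ∑ j, ‖(starRingEnd ℂ) (β j) • γ j‖
      = ∑ j, ‖β j‖ * ‖γ j‖ := by simp [norm_smul]
    _ ≤ ∑ j, (‖γ j‖ ^ 2 + N * ‖β j‖ ^ 2) / (2 * Real.sqrt N) :=
      Finset.sum_le_sum fun j _ => mul_le_sq_add_mul_sq_div (by exact_mod_cast hN) _ _
    _ = _ := by
      rw [← Finset.sum_div, Finset.sum_add_distrib, hγ, ← Finset.mul_sum, ← hβ]
      ring

end

/-- (Semidefinite characterization of the MMV atomic norm) `‖Y‖_𝒜` equals the optimal
value of the SDP minimizing `(1/(2√N)) tr(U)` over positive semidefinite Hermitian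
`U = [[W, Yᴴ],[Y, T(u)]]` with `T(u)` Hermitian Toeplitz. -/
theorem stmt14 (N L : ℕ) (Y : Matrix (Fin N) (Fin L) ℂ) :
    atomicNorm N L Y = sInf {v : ℝ |
      ∃ (W : Matrix (Fin L) (Fin L) ℂ) (Tm : Matrix (Fin N) (Fin N) ℂ),
        IsToeplitz Tm ∧
        (Matrix.fromBlocks W Yᴴ Y Tm).PosSemidef ∧
        v = (1 / (2 * Real.sqrt N)) * ((Matrix.fromBlocks W Yᴴ Y Tm).trace).re} :=
  csInf_eq_csInf_of_forall_exists_le (fun _ => exists_mem_sdpValues_le_of_mem_atomicCosts)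
    (fun _ => exists_mem_atomicCosts_le_of_mem_sdpValues)
end
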